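/- The unique Laurent series solution x ∈ ℚ((t⁻¹)) of degree ≥ 1 of 3x³ − 3tx² − 3ax + at = 0 (a ∈ ℚ a parameter) satisfies the Riccati differential equation (t⁴ + 3at² + 3a²)x' = a² + atx + t²x². -/

import Mathlib

/-!
Differentiating the cubic `P(x, t) = 3x³ − 3tx² − 3ax + at` gives `P_x · x' + P_t = 0`. The
discriminant of `P` in `x` is a multiple of `a (t⁴ + 3at² + 3a²)`, so there is a polynomial `v`
with `v · P_x ≡ 2a (t⁴ + 3at² + 3a²)` modulo `P`; multiplying the differentiated equation by `v`
and reducing modulo `P` yields the Riccati equation times `2a`. For `a = 0` the roots are `0`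
and `t`, which are checked directly.
-/

open Polynomial

/-- The formal derivative (with respect to `X`) of a formal Laurent series. -/
noncomputable def lsDeriv {F : Type*} [Field F] (f : LaurentSeries F) : LaurentSeries F where
  coeff n := (n + 1 : ℤ) * f.coeff (n + 1)
  isPWO_support' := by
    refine ((HahnSeries.single (-1 : ℤ) (1 : F) * f).isPWO_support).mono ?_
    intro n hn
    have hf : f.coeff (n + 1) ≠ 0 := by
      intro h
      apply hn
      simp [h]
    have hcoeff : (HahnSeries.single (-1 : ℤ) (1 : F) * f).coeff n = f.coeff (n + 1) := by
      have := HahnSeries.coeff_single_mul_add (r := (1 : F)) (x := f) (b := (-1 : ℤ)) (a := n + 1)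
      simpa using this
    simp only [HahnSeries.mem_support, hcoeff]
    exact hf

/-- `t`, as an element of `ℚ((t⁻¹))`: the field of Laurent series in `X = t⁻¹`,
so `t = X⁻¹` is the Hahn series with a single coefficient `1` in degree `-1`. -/
noncomputable def lsT : LaurentSeries ℚ := HahnSeries.single (-1 : ℤ) 1

/-- The formal derivative with respect to `t` on `ℚ((t⁻¹))`: since `X = t⁻¹`,
`d/dt = -X² · d/dX`. -/
noncomputable def tDeriv (f : LaurentSeries ℚ) : LaurentSeries ℚ :=
  -(HahnSeries.single (2 : ℤ) (1 : ℚ)) * lsDeriv f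

section LaurentSeries

variable {F : Type*} [Field F]

/-- The Euler operator `X · d/dX`. Unlike `d/dX` it does not shift degrees, so its Leibniz rule
is a termwise identity of Cauchy products. -/
noncomputable def lsEuler (f : LaurentSeries F) : LaurentSeries F where
  coeff n := n * f.coeff n
  isPWO_support' := f.isPWO_support.mono fun n hn h => hn (by simp [h])

theorem lsEuler_coeff (f : LaurentSeries F) (n : ℤ) : (lsEuler f).coeff n = n * f.coeff n :=
  rfl

theorem support_lsEuler_subset (f : LaurentSeries F) : (lsEuler f).support ⊆ f.support :=
  fun n hn h => hn (by simp [lsEuler_coeff, h])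

theorem lsEuler_mul (f g : LaurentSeries F) :
    lsEuler (f * g) = lsEuler f * g + f * lsEuler g := by
  ext n
  rw [HahnSeries.coeff_add,
    HahnSeries.coeff_mul_left' f.isPWO_support (support_lsEuler_subset f),
    HahnSeries.coeff_mul_right' g.isPWO_support (support_lsEuler_subset g),
    lsEuler_coeff, HahnSeries.coeff_mul, Finset.mul_sum, ← Finset.sum_add_distrib]
  refine Finset.sum_congr rfl fun ij hij => ?_
  rw [← (Finset.mem_antidiagonal.mp hij).2.2, lsEuler_coeff, lsEuler_coeff]
  push_cast
  ring

theorem lsDeriv_coeff (f : LaurentSeries F) (n : ℤ) :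
    (lsDeriv f).coeff n = ((n + 1 : ℤ) : F) * f.coeff (n + 1) :=
  rfl

theorem lsDeriv_eq_single_mul_lsEuler (f : LaurentSeries F) :
    lsDeriv f = HahnSeries.single (-1) 1 * lsEuler f := by
  ext n
  have h := HahnSeries.coeff_single_mul_add (r := (1 : F)) (x := lsEuler f) (a := n + 1) (b := -1)
  rw [add_neg_cancel_right, one_mul] at h
  rw [h, lsDeriv_coeff, lsEuler_coeff]

theorem lsDeriv_mul (f g : LaurentSeries F) :
    lsDeriv (f * g) = f * lsDeriv g + g * lsDeriv f := by
  simp only [lsDeriv_eq_single_mul_lsEuler, lsEuler_mul]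
  ring

theorem lsDeriv_single (m : ℤ) (c : F) :
    lsDeriv (HahnSeries.single m c) = HahnSeries.single (m - 1) ((m : F) * c) := by
  ext n
  rw [lsDeriv_coeff, HahnSeries.coeff_single, HahnSeries.coeff_single]
  rcases eq_or_ne (n + 1) m with rfl | h
  · simp
  · rw [if_neg h, if_neg (by omega), mul_zero]

noncomputable def lsDerivation : Derivation F (LaurentSeries F) (LaurentSeries F) where
  toFun := lsDeriv
  map_add' f g := by ext n; simp [lsDeriv_coeff, mul_add]
  map_smul' c f := by
    ext n
    rw [RingHom.id_apply, Algebra.smul_def, LaurentSeries.algebraMap_apply,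
      HahnSeries.C_mul_eq_smul, lsDeriv_coeff, HahnSeries.coeff_smul, HahnSeries.coeff_smul, lsDeriv_coeff, smul_eq_mul,
      smul_eq_mul, mul_left_comm]
  map_one_eq_zero' := by simp [← HahnSeries.single_zero_one, lsDeriv_single]
  leibniz' := lsDeriv_mul

end LaurentSeries

noncomputable def tDerivation : Derivation ℚ (LaurentSeries ℚ) (LaurentSeries ℚ) :=
  -HahnSeries.single (2 : ℤ) (1 : ℚ) • lsDerivation

theorem tDerivation_apply (f : LaurentSeries ℚ) : tDerivation f = tDeriv f :=
  rfl

theorem tDeriv_lsT : tDeriv lsT = 1 := by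
  rw [tDeriv, lsT, lsDeriv_single, neg_mul, HahnSeries.single_mul_single]
  norm_num

theorem riccati_of_cubic_of_ne_zero {K : Type*} [Field K] {t a x x' : K} (ha : 2 * a ≠ 0)
    (hroot : 3 * x ^ 3 - 3 * t * x ^ 2 - 3 * a * x + a * t = 0)
    (hderiv : (9 * x ^ 2 - 6 * t * x - 3 * a) * x' + (a - 3 * x ^ 2) = 0) :
    (t ^ 4 + 3 * a * t ^ 2 + 3 * a ^ 2) * x' = a ^ 2 + a * t * x + t ^ 2 * x ^ 2 := by
  refine mul_left_cancel₀ ha ?_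
  -- `v = x²t² + 3x²a − xt³ − 2xta − t²a − 2a²` is `−p'(r₂)p'(r₃)/2`, where `x, r₂, r₃` are the
  -- roots of `p = P/3`; hence `v · P_x ≡ 2a (t⁴ + 3at² + 3a²)` modulo `P`, a multiple of the
  -- discriminant of `p`.
  linear_combination
    (x ^ 2 * t ^ 2 + 3 * x ^ 2 * a - x * t ^ 3 - 2 * x * t * a - t ^ 2 * a - 2 * a ^ 2) * hderiv
    + (x * t ^ 2 + 3 * x * a + t * a - (3 * x * t ^ 2 + 9 * x * a - 2 * t ^ 3 - 3 * t * a) * x')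
      * hroot

theorem riccati_of_cubic_no5_general (a : ℚ) (x : LaurentSeries ℚ)
    (hroot : 3 * x ^ 3 - 3 * lsT * x ^ 2
        - 3 * algebraMap ℚ (LaurentSeries ℚ) a * x + algebraMap ℚ (LaurentSeries ℚ) a * lsT = 0) :
    (lsT ^ 4 + 3 * algebraMap ℚ (LaurentSeries ℚ) a * lsT ^ 2
        + 3 * algebraMap ℚ (LaurentSeries ℚ) a ^ 2) * tDeriv x =
      algebraMap ℚ (LaurentSeries ℚ) a ^ 2
        + algebraMap ℚ (LaurentSeries ℚ) a * lsT * x + lsT ^ 2 * x ^ 2 := by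
  set A := algebraMap ℚ (LaurentSeries ℚ) a
  have hA : tDerivation A = 0 := tDerivation.map_algebraMap a
  have h3 : tDerivation 3 = 0 := by exact_mod_cast tDerivation.map_natCast 3
  have hderiv : (9 * x ^ 2 - 6 * lsT * x - 3 * A) * tDeriv x + (A - 3 * x ^ 2) = 0 := by
    have h := congrArg tDerivation hroot
    simp only [map_sub, map_add, map_zero, Derivation.leibniz, Derivation.leibniz_pow,
      tDeriv_lsT, hA, h3, tDerivation_apply, smul_eq_mul, nsmul_eq_mul] at h
    linear_combination h
  have : CharZero (LaurentSeries ℚ) :=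
    charZero_of_injective_algebraMap (algebraMap ℚ (LaurentSeries ℚ)).injective
  rcases eq_or_ne a 0 with rfl | ha
  · obtain rfl | rfl : x = 0 ∨ x = lsT := by
      have hx : 3 * x ^ 2 * (x - lsT) = 0 := by
        simp only [A, map_zero] at hroot
        linear_combination hroot
      simpa [sub_eq_zero] using hx
    · simp [A, ← tDerivation_apply]
    · simp only [A, map_zero, tDeriv_lsT]
      ring
  · exact riccati_of_cubic_of_ne_zero (by simpa [A] using ha) hroot hderiv

/-- The unique Laurent series solution `x ∈ ℚ((t⁻¹))` of degree ≥ 1 (i.e. `x.order ≤ -1`)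
of `3x³ − 3tx² − 3ax + at = 0` (`a ∈ ℚ` a parameter) satisfies the Riccati differential
equation `(t⁴ + 3at² + 3a²)x' = a² + atx + t²x²`. -/
theorem riccati_of_cubic_no5 (a : ℚ) (x : LaurentSeries ℚ)
    (hroot : 3 * x ^ 3 - 3 * lsT * x ^ 2
        - 3 * algebraMap ℚ (LaurentSeries ℚ) a * x + algebraMap ℚ (LaurentSeries ℚ) a * lsT = 0)
    (hdeg : x.order ≤ -1) :
    (lsT ^ 4 + 3 * algebraMap ℚ (LaurentSeries ℚ) a * lsT ^ 2
        + 3 * algebraMap ℚ (LaurentSeries ℚ) a ^ 2) * tDeriv x =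
      algebraMap ℚ (LaurentSeries ℚ) a ^ 2
        + algebraMap ℚ (LaurentSeries ℚ) a * lsT * x + lsT ^ 2 * x ^ 2 :=
  riccati_of_cubic_no5_general a x hroot
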